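/- arXiv:2502.14624 — 3 statements merged into one kernel-verified Lean document; each statement's English description precedes it below -/
import Mathlib

section
/- If K is a convex body in R^d whose Gaussian measure satisfies γ_d(K) ≥ 1/2 + ε for some ε > 0, then the closed Euclidean ball of radius ε centered at the origin is contained in K. -/
/-!
If some `x` with `‖x‖ ≤ ε` lies outside `K`, it lies outside the open convex set `interior K`, so
Hahn–Banach gives a functional `L`, which we may normalise to `‖L‖ = 1`, with
`interior K ⊆ {L < L x} ⊆ {L ≤ ε}`. Under the standard Gaussian `L` is a standard normal variable,
so this half-space has measure `Φ(ε) ≤ 1/2 + ε / √(2π) < 1/2 + ε`. Finally the frontier of a convex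
set is Lebesgue-null, hence Gaussian-null, so `γ(K) = γ(interior K)`.
-/

open MeasureTheory ProbabilityTheory Real
open scoped NNReal

namespace MeasureTheory.Measure

theorem AbsolutelyContinuous.pi_fin {n : ℕ} {α : Fin n → Type*} [∀ i, MeasurableSpace (α i)]
    {μ ν : ∀ i, Measure (α i)} [∀ i, SigmaFinite (μ i)] [∀ i, SigmaFinite (ν i)]
    (h : ∀ i, μ i ≪ ν i) : Measure.pi μ ≪ Measure.pi ν := by
  induction n with
  | zero => rw [pi_of_empty μ, pi_of_empty ν]
  | succ n ih =>
    rw [← (measurePreserving_piFinSuccAbove μ 0).symm.map_eq,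
      ← (measurePreserving_piFinSuccAbove ν 0).symm.map_eq]
    exact ((h 0).prod (ih fun j => h _)).map (MeasurableEquiv.measurable _)

theorem AbsolutelyContinuous.pi {ι : Type*} [Fintype ι] {α : ι → Type*}
    [∀ i, MeasurableSpace (α i)] {μ ν : ∀ i, Measure (α i)} [∀ i, SigmaFinite (μ i)]
    [∀ i, SigmaFinite (ν i)] (h : ∀ i, μ i ≪ ν i) : Measure.pi μ ≪ Measure.pi ν := by
  let e := (Fintype.equivFin ι).symm
  rw [← (measurePreserving_piCongrLeft μ e).map_eq, ← (measurePreserving_piCongrLeft ν e).map_eq]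
  exact (AbsolutelyContinuous.pi_fin fun i => h (e i)).map (MeasurableEquiv.measurable _)

end MeasureTheory.Measure

namespace ProbabilityTheory

lemma stdGaussian_absolutelyContinuous_volume (ι : Type*) [Fintype ι] :
    stdGaussian (EuclideanSpace ℝ ι) ≪ volume := by
  rw [← map_pi_eq_stdGaussian, ← (PiLp.volume_preserving_toLp ι).map_eq, volume_pi]
  exact (Measure.AbsolutelyContinuous.pi fun _ =>
    gaussianReal_absolutelyContinuous 0 one_ne_zero).map (by fun_prop)

lemma measure_Iic_zero_of_map_neg_eq {μ : Measure ℝ} [IsProbabilityMeasure μ]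
    [NullSingletonClass μ] (h : μ.map Neg.neg = μ) : μ (Set.Iic 0) = 2⁻¹ := by
  have hsymm : μ (Set.Ioi 0) = μ (Set.Iic 0) := by
    conv_rhs => rw [← h, Measure.map_apply measurable_neg measurableSet_Iic]
    rw [measure_congr Ioi_ae_eq_Ici]
    simp
  have hsum : μ (Set.Iic 0) + μ (Set.Ioi 0) = 1 := by
    rw [← measure_union (Set.Iic_disjoint_Ioi le_rfl) measurableSet_Ioi, Set.Iic_union_Ioi,
      measure_univ]
  rw [hsymm, ← two_mul, mul_comm] at hsum
  exact ENNReal.eq_inv_of_mul_eq_one_left hsum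

lemma gaussianPDFReal_le (μ : ℝ) (v : ℝ≥0) (x : ℝ) : gaussianPDFReal μ v x ≤ (√(2 * π * v))⁻¹ :=
  mul_le_of_le_one_right (by positivity) <| exp_le_one_iff.2 <|
    div_nonpos_of_nonpos_of_nonneg (neg_nonpos.2 (sq_nonneg _)) (by positivity)

lemma gaussianReal_le_mul_volume (μ : ℝ) {v : ℝ≥0} (hv : v ≠ 0) (s : Set ℝ) :
    gaussianReal μ v s ≤ ENNReal.ofReal (√(2 * π * v))⁻¹ * volume s := by
  rw [gaussianReal_apply μ hv, ← setLIntegral_const]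
  exact lintegral_mono fun x => ENNReal.ofReal_le_ofReal (gaussianPDFReal_le μ v x)

lemma gaussianReal_Iic_lt {ε : ℝ} (hε : 0 < ε) :
    gaussianReal 0 1 (Set.Iic ε) < ENNReal.ofReal (1 / 2 + ε) := by
  have : NullSingletonClass (gaussianReal 0 1) := nullSingletonClass_gaussianReal one_ne_zero
  have hc : (√(2 * π * (1 : ℝ≥0)))⁻¹ < 1 := by
    refine inv_lt_one_of_one_lt₀ ((lt_sqrt zero_le_one).2 ?_)
    push_cast
    linarith [pi_gt_three]
  calc gaussianReal 0 1 (Set.Iic ε)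
      ≤ gaussianReal 0 1 (Set.Iic 0) + gaussianReal 0 1 (Set.Ioc 0 ε) := by
        rw [← Set.Iic_union_Ioc_eq_Iic hε.le]
        exact measure_union_le _ _
    _ ≤ 2⁻¹ + ENNReal.ofReal (√(2 * π * (1 : ℝ≥0)))⁻¹ * ENNReal.ofReal ε := by
        refine add_le_add (measure_Iic_zero_of_map_neg_eq (by simp [gaussianReal_map_neg])).le ?_
        exact (gaussianReal_le_mul_volume 0 one_ne_zero _).trans_eq
          (by rw [Real.volume_Ioc, sub_zero])
    _ < 2⁻¹ + ENNReal.ofReal ε := by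
        rw [← ENNReal.ofReal_mul (by positivity)]
        refine ENNReal.add_lt_add_left (by simp) ((ENNReal.ofReal_lt_ofReal_iff hε).2 ?_)
        exact mul_lt_of_lt_one_left hε hc
    _ = ENNReal.ofReal (1 / 2 + ε) := by
        rw [ENNReal.ofReal_add (by norm_num) hε.le, one_div, ENNReal.ofReal_inv_of_pos two_pos]
        simp

section stdGaussian

variable {E : Type*} [NormedAddCommGroup E] [InnerProductSpace ℝ E] [FiniteDimensional ℝ E]
  [MeasurableSpace E] [BorelSpace E]

lemma stdGaussian_map_of_norm_eq_one {L : StrongDual ℝ E} (hL : ‖L‖ = 1) :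
    (stdGaussian E).map L = gaussianReal 0 1 := by
  rw [IsGaussian.map_eq_gaussianReal, integral_strongDual_stdGaussian, variance_dual_stdGaussian,
    hL]
  simp

lemma stdGaussian_lt_of_norm_le (L : StrongDual ℝ E) {x : E} {ε : ℝ} (hε : 0 < ε)
    (hx : ‖x‖ ≤ ε) : stdGaussian E {y | L y < L x} < ENNReal.ofReal (1 / 2 + ε) := by
  rcases eq_or_ne L 0 with rfl | hL
  · simp only [zero_apply, lt_self_iff_false, Set.ofPred_false, measure_empty]
    positivity
  set L₁ := ‖L‖⁻¹ • L
  have hL₁ : ‖L₁‖ = 1 := norm_smul_inv_norm hL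
  have hsub : {y | L y < L x} ⊆ L₁ ⁻¹' Set.Iic ε := fun y hy => by
    calc L₁ y ≤ L₁ x := mul_le_mul_of_nonneg_left (le_of_lt hy) (by positivity)
      _ ≤ ‖L₁‖ * ‖x‖ := (Real.le_norm_self _).trans (L₁.le_opNorm x)
      _ ≤ ε := by rwa [hL₁, one_mul]
  calc stdGaussian E {y | L y < L x} ≤ stdGaussian E (L₁ ⁻¹' Set.Iic ε) := measure_mono hsub
    _ = gaussianReal 0 1 (Set.Iic ε) := by
        rw [← stdGaussian_map_of_norm_eq_one hL₁,
          Measure.map_apply L₁.measurable measurableSet_Iic]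
    _ < ENNReal.ofReal (1 / 2 + ε) := gaussianReal_Iic_lt hε

end stdGaussian

lemma stdGaussian_interior_eq_of_convex {ι : Type*} [Fintype ι] {K : Set (EuclideanSpace ℝ ι)}
    (hK : Convex ℝ K) : stdGaussian _ (interior K) = stdGaussian _ K := by
  refine le_antisymm (measure_mono interior_subset) ?_
  have hfrontier : stdGaussian (EuclideanSpace ℝ ι) (frontier K) = 0 :=
    stdGaussian_absolutelyContinuous_volume ι (hK.addHaar_frontier _)
  calc stdGaussian _ K ≤ stdGaussian _ (interior K ∪ frontier K) := by
        rw [← closure_eq_interior_union_frontier]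
        exact measure_mono subset_closure
    _ ≤ stdGaussian _ (interior K) := by
        simpa [hfrontier] using measure_union_le (μ := stdGaussian _) (interior K) (frontier K)

end ProbabilityTheory

/-- If `K` is a convex body in `ℝ^d` whose Gaussian measure satisfies
`γ_d(K) ≥ 1/2 + ε` for some `ε > 0`, then the closed Euclidean ball of radius `ε`
centered at the origin is contained in `K`. -/
theorem stmt0 (d : ℕ) (K : Set (EuclideanSpace ℝ (Fin d))) (hK : Convex ℝ K)
    (ε : ℝ) (hε : 0 < ε)
    (hmeas : ENNReal.ofReal (1 / 2 + ε) ≤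
      ((Measure.pi fun _ : Fin d => gaussianReal 0 1).map
        ⇑(EuclideanSpace.equiv (Fin d) ℝ).symm) K) :
    Metric.closedBall (0 : EuclideanSpace ℝ (Fin d)) ε ⊆ K := by
  have hγ : (Measure.pi fun _ : Fin d => gaussianReal 0 1).map
      ⇑(EuclideanSpace.equiv (Fin d) ℝ).symm = stdGaussian _ := map_pi_eq_stdGaussian
  rw [hγ, ← stdGaussian_interior_eq_of_convex hK] at hmeas
  intro x hx
  by_contra hxK
  obtain ⟨f, hf⟩ := geometric_hahn_banach_open_point hK.interior isOpen_interior
    (fun h => hxK (interior_subset h))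
  have hlt := (measure_mono fun y hy => hf y hy).trans_lt
    (stdGaussian_lt_of_norm_le f hε (mem_closedBall_zero_iff.1 hx))
  exact hlt.not_ge hmeas
end

section
/- Fix positive integers L, K, c with L < K/(4e). Let Y_1, …, Y_K be i.i.d. random variables supported in [0,1]. Then Pr[ Σ_{i ≤ K−L} Y_i − Σ_{i > K−L} Y_i < −c ] ≤ 4 · (2eL/K)^{c+1}. -/
/-!
Fix an outcome `y ∈ [0,1]^K` and call an `L`-subset `R` of the indices bad if
`∑_{Rᶜ} y - ∑_R y < -c`. After sorting `y`, Abel summation reduces `∑_R y - ∑_{Rᶜ} y ≤ c` to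
`2 |R ∩ T| ≤ |T| + c` for every set `T` of top-ranked indices, and by monotonicity in `T` it
suffices to check this when `|T| = 2j-c-1`. So a bad `R` contains, for some `j ∈ [c+1, L]`, at
least `j` of the `2j-c-1` indices carrying the largest values of `y`.
Counting the `L`-subsets with this property bounds the number of bad subsets by
`∑_j 4^j (L/K)^j C(K,L) ≤ 2 (4L/K)^(c+1) C(K,L)` when `8L ≤ K`.
Since the `Y_i` are i.i.d., their joint law is invariant under permutations of coordinates, so
every `L`-subset is bad with the same probability as the last `L` coordinates; averaging over all
`C(K,L)` subsets bounds that probability by `2 (4L/K)^(c+1) ≤ 4 (2eL/K)^(c+1)`.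
-/

open MeasureTheory ProbabilityTheory Finset
open scoped ENNReal

-- Abel summation. The offset `u` makes the induction work: removing the least index `a` leaves
-- the same statement with `u := y a`.
theorem sum_mul_sub_le_of_tail_sum_le {ι : Type*} [LinearOrder ι] {s : Finset ι}
    {ε y : ι → ℝ} {c u : ℝ} (hc : 0 ≤ c) (hy : MonotoneOn y s) (hy1 : ∀ i ∈ s, y i ≤ 1)
    (htail : ∀ a ∈ s, ∑ i ∈ s with a ≤ i, ε i ≤ c) (hu : ∀ i ∈ s, u ≤ y i) (hu1 : u ≤ 1) :
    ∑ i ∈ s, ε i * (y i - u) ≤ c * (1 - u) := by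
  induction s using Finset.induction_on_min generalizing u with
  | empty => simpa using mul_nonneg hc (sub_nonneg.2 hu1)
  | insert a s has ih =>
    have ha : a ∉ s := fun h => lt_irrefl a (has a h)
    have htail_s : ∀ b ∈ s, ∑ i ∈ s with b ≤ i, ε i ≤ c := by
      intro b hb
      have h := htail b (mem_insert_of_mem hb)
      rwa [filter_insert, if_neg (has b hb).not_ge] at h
    have hIH := ih (hy.mono (subset_insert a s)) (fun i hi => hy1 i (mem_insert_of_mem hi))
      htail_s (fun i hi => hy (mem_insert_self a s) (mem_insert_of_mem hi) (has i hi).le)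
      (hy1 a (mem_insert_self a s))
    have htotal : ∑ i ∈ insert a s, ε i ≤ c := by
      have h := htail a (mem_insert_self a s)
      rwa [filter_true_of_mem fun i hi => ?_] at h
      rcases mem_insert.1 hi with rfl | hi
      exacts [le_rfl, (has i hi).le]
    calc ∑ i ∈ insert a s, ε i * (y i - u)
        = ∑ i ∈ s, ε i * (y i - y a) + (y a - u) * ∑ i ∈ insert a s, ε i := by
          rw [sum_insert ha, sum_insert ha, mul_add, mul_sum,
            sum_congr rfl fun i _ => show ε i * (y i - u) = ε i * (y i - y a) + (y a - u) * ε i by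
              ring, sum_add_distrib]
          ring
      _ ≤ c * (1 - y a) + (y a - u) * c :=
          add_le_add hIH (mul_le_mul_of_nonneg_left htotal
            (sub_nonneg.2 (hu a (mem_insert_self a s))))
      _ = c * (1 - u) := by ring

theorem two_mul_card_inter_le {α : Type*} [DecidableEq α] {V : ℕ → Finset α} (hV : Monotone V)
    (hVcard : ∀ t, #(V t) ≤ t) {R : Finset α} {L c : ℕ} (hR : #R ≤ L)
    (H : ∀ j, c + 1 ≤ j → j ≤ L → #(R ∩ V (2 * j - (c + 1))) < j) (t : ℕ) :
    2 * #(R ∩ V t) ≤ t + c := by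
  -- `2 * j - (c + 1)` is `t` or `t + 1`
  set j := (t + c + 2) / 2
  have hj : #(R ∩ V (2 * j - (c + 1))) < j := by
    by_cases h1 : c + 1 ≤ j
    · by_cases h2 : j ≤ L
      · exact H j h1 h2
      · exact (card_le_card inter_subset_left).trans_lt (by omega)
    · exact ((card_le_card inter_subset_right).trans (hVcard _)).trans_lt (by omega)
  have hmono : #(R ∩ V t) ≤ #(R ∩ V (2 * j - (c + 1))) :=
    card_le_card (inter_subset_inter_left (hV (by omega)))
  omega

theorem sum_ite_mem_one_neg_one {α : Type*} [DecidableEq α] (R U : Finset α) :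
    ∑ i ∈ U, (if i ∈ R then (1 : ℝ) else -1) = 2 * #(R ∩ U) - #U := by
  have h := card_filter_add_card_filter_not (s := U) (· ∈ R)
  rw [sum_ite, sum_const, sum_const, ← h, filter_mem_eq_inter, inter_comm]
  push_cast
  ring

def imbalance {ι : Type*} [Fintype ι] [DecidableEq ι] (R : Finset ι) (y : ι → ℝ) : ℝ :=
  ∑ i ∈ Rᶜ, y i - ∑ i ∈ R, y i

theorem sum_ite_mem_mul_eq_neg_imbalance {ι : Type*} [Fintype ι] [DecidableEq ι] (R : Finset ι)
    (y : ι → ℝ) : ∑ i, (if i ∈ R then (1 : ℝ) else -1) * y i = -imbalance R y := by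
  simp_rw [ite_mul, one_mul, neg_one_mul]
  rw [sum_ite, filter_mem_eq_inter, univ_inter, sum_neg_distrib, imbalance, neg_sub,
    ← sub_eq_add_neg]
  congr 2
  ext i
  simp

theorem imbalance_map_equiv {ι : Type*} [Fintype ι] [DecidableEq ι] (R : Finset ι)
    (σ : ι ≃ ι) (y : ι → ℝ) : imbalance (R.map σ.toEmbedding) y = imbalance R (y ∘ σ) := by
  have hcompl : (R.map σ.toEmbedding)ᶜ = Rᶜ.map σ.toEmbedding := by
    ext i
    simp [mem_map_equiv]
  rw [imbalance, imbalance, hcompl, sum_map, sum_map]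
  rfl

theorem measurableSet_imbalance_lt {ι : Type*} [Fintype ι] [DecidableEq ι] (R : Finset ι)
    (a : ℝ) : MeasurableSet {y : ι → ℝ | imbalance R y < a} :=
  measurableSet_lt (by unfold imbalance; fun_prop) measurable_const

section TopIndices

variable {K : ℕ}

-- The indices of the `t` largest entries of `y`, ties broken by `Tuple.sort`.
noncomputable def topIndices (y : Fin K → ℝ) (t : ℕ) : Finset (Fin K) :=
  Finset.map (Tuple.sort y).toEmbedding {i : Fin K | K ≤ (i : ℕ) + t}

theorem topIndices_mono (y : Fin K → ℝ) : Monotone (topIndices y) := by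
  intro t t' h
  refine map_subset_map.2 fun i => ?_
  simp only [mem_filter, mem_univ, true_and]
  omega

theorem card_topIndices_le (y : Fin K → ℝ) (t : ℕ) : #(topIndices y t) ≤ t := by
  rw [topIndices, card_map]
  calc #{i : Fin K | K ≤ (i : ℕ) + t} ≤ #(Ico (K - t) K) :=
        card_le_card_of_injOn (↑) (fun i hi => by
          simp only [coe_filter, mem_univ, true_and, Set.mem_ofPred_eq, coe_Ico, Set.mem_Ico]
            at hi ⊢
          omega) Fin.val_injective.injOn
    _ ≤ t := by simp only [Nat.card_Ico]; omega

theorem map_Ici_sort_eq_topIndices (y : Fin K → ℝ) (a : Fin K) :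
    (Ici a).map (Tuple.sort y).toEmbedding = topIndices y (K - a) := by
  rw [topIndices]
  congr 1
  ext i
  simp only [mem_Ici, mem_filter, mem_univ, true_and, Fin.le_def]
  omega

theorem neg_le_imbalance_of_card_inter_topIndices_lt {y : Fin K → ℝ}
    (hy : ∀ i, y i ∈ Set.Icc 0 1) {R : Finset (Fin K)} {L c : ℕ} (hR : #R ≤ L)
    (H : ∀ j, c + 1 ≤ j → j ≤ L → #(R ∩ topIndices y (2 * j - (c + 1))) < j) :
    -(c : ℝ) ≤ imbalance R y := by
  set σ := Tuple.sort y
  set ε : Fin K → ℝ := fun i => if i ∈ R then 1 else -1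
  have htop := two_mul_card_inter_le (topIndices_mono y) (card_topIndices_le y) hR H
  have htail : ∀ a ∈ (univ : Finset (Fin K)), ∑ i ∈ univ with a ≤ i, ε (σ i) ≤ c := by
    intro a _
    have hcard : #(topIndices y (K - a)) = K - a := by
      rw [← map_Ici_sort_eq_topIndices, card_map, Fin.card_Ici]
    have hbound : (2 * #(R ∩ topIndices y (K - a)) : ℝ) ≤ #(topIndices y (K - a)) + c := by
      rw [hcard]
      exact_mod_cast htop (K - a)
    have hsum : ∑ i ∈ Ici a, ε (σ i) = ∑ i ∈ (Ici a).map σ.toEmbedding, ε i :=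
      (sum_map (Ici a) σ.toEmbedding ε).symm
    rw [filter_le_eq_Ici, hsum, map_Ici_sort_eq_topIndices, sum_ite_mem_one_neg_one]
    linarith
  have key := sum_mul_sub_le_of_tail_sum_le (u := 0) (Nat.cast_nonneg c)
    ((Tuple.monotone_sort y).monotoneOn _) (fun i _ => (hy _).2) htail (fun i _ => (hy _).1)
    zero_le_one
  simp only [sub_zero, mul_one, Function.comp_apply] at key
  rw [Equiv.sum_comp σ (fun i => ε i * y i), sum_ite_mem_mul_eq_neg_imbalance] at key
  linarith

end TopIndices

theorem card_powersetCard_filter_le_card_inter_le {α : Type*} [Fintype α] [DecidableEq α]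
    (U : Finset α) {j L : ℕ} (hjL : j ≤ L) :
    #{R ∈ powersetCard L (univ : Finset α) | j ≤ #(R ∩ U)}
      ≤ (#U).choose j * (Fintype.card α - j).choose (L - j) := by
  calc #{R ∈ powersetCard L (univ : Finset α) | j ≤ #(R ∩ U)}
      ≤ #((powersetCard j U).biUnion fun S => {R ∈ powersetCard L univ | S ⊆ R}) := by
        refine card_le_card fun R hR => ?_
        rw [mem_filter] at hR
        obtain ⟨S, hSR, hS⟩ := exists_subset_card_eq hR.2
        exact mem_biUnion.2 ⟨S, mem_powersetCard.2 ⟨hSR.trans inter_subset_right, hS⟩,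
          mem_filter.2 ⟨hR.1, hSR.trans inter_subset_left⟩⟩
    _ ≤ ∑ S ∈ powersetCard j U, #{R ∈ powersetCard L univ | S ⊆ R} := card_biUnion_le
    _ = (#U).choose j * (Fintype.card α - j).choose (L - j) := by
        rw [sum_congr rfl fun S hS => ?_, sum_const, card_powersetCard, smul_eq_mul]
        have hS' := (mem_powersetCard.1 hS).2
        rw [card_filter_powersetCard_subset S univ L (subset_univ S) (hS' ▸ hjL), card_univ, hS']

theorem pow_mul_descFactorial_le {K L : ℕ} (hLK : L ≤ K) (j : ℕ) :
    K ^ j * L.descFactorial j ≤ L ^ j * K.descFactorial j := by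
  induction j with
  | zero => simp
  | succ j ih =>
    have h : K * (L - j) ≤ L * (K - j) := by
      rw [Nat.mul_sub, Nat.mul_sub, mul_comm K L]
      exact Nat.sub_le_sub_left (Nat.mul_le_mul_right j hLK) _
    rw [Nat.descFactorial_succ, Nat.descFactorial_succ]
    calc K ^ (j + 1) * ((L - j) * L.descFactorial j)
        = K * (L - j) * (K ^ j * L.descFactorial j) := by ring
      _ ≤ L * (K - j) * (L ^ j * K.descFactorial j) := Nat.mul_le_mul h ih
      _ = L ^ (j + 1) * ((K - j) * K.descFactorial j) := by ring

theorem pow_mul_choose_sub_le {K L j : ℕ} (hLK : L ≤ K) (hjL : j ≤ L) :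
    K ^ j * (K - j).choose (L - j) ≤ L ^ j * K.choose L := by
  have hratio : K ^ j * L.choose j ≤ L ^ j * K.choose j := by
    have h := pow_mul_descFactorial_le hLK j
    rw [Nat.descFactorial_eq_factorial_mul_choose, Nat.descFactorial_eq_factorial_mul_choose,
      mul_left_comm, mul_left_comm (L ^ j)] at h
    exact Nat.le_of_mul_le_mul_left h (Nat.factorial_pos j)
  refine Nat.le_of_mul_le_mul_left ?_ (Nat.choose_pos (hjL.trans hLK))
  calc K.choose j * (K ^ j * (K - j).choose (L - j))
      = K ^ j * L.choose j * K.choose L := by rw [mul_left_comm, ← Nat.choose_mul hjL]; ring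
    _ ≤ L ^ j * K.choose j * K.choose L := Nat.mul_le_mul_right _ hratio
    _ = K.choose j * (L ^ j * K.choose L) := by ring

theorem card_powersetCard_filter_le_card_inter_le_pow {K L j : ℕ} (hK : 0 < K) (hLK : L ≤ K)
    (hjL : j ≤ L) (U : Finset (Fin K)) (hU : #U ≤ 2 * j) :
    (#{R ∈ powersetCard L (univ : Finset (Fin K)) | j ≤ #(R ∩ U)} : ℝ)
      ≤ (4 * L / K) ^ j * K.choose L := by
  have hcount := card_powersetCard_filter_le_card_inter_le U hjL
  rw [Fintype.card_fin] at hcount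
  have hchoose : (#U).choose j ≤ 4 ^ j :=
    calc (#U).choose j ≤ 2 ^ (2 * j) :=
          (Nat.choose_le_two_pow _ _).trans (Nat.pow_le_pow_right two_pos hU)
      _ = 4 ^ j := by rw [pow_mul]; norm_num
  have hratio : (K ^ j * (K - j).choose (L - j) : ℝ) ≤ L ^ j * K.choose L := by
    exact_mod_cast pow_mul_choose_sub_le hLK hjL
  have hKj : (0 : ℝ) < K ^ j := by positivity
  calc (#{R ∈ powersetCard L (univ : Finset (Fin K)) | j ≤ #(R ∩ U)} : ℝ)
      ≤ 4 ^ j * (K - j).choose (L - j) := by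
        exact_mod_cast hcount.trans (Nat.mul_le_mul_right _ hchoose)
    _ ≤ 4 ^ j * (L ^ j * K.choose L / K ^ j) := by
        gcongr
        rw [le_div_iff₀ hKj]
        linarith
    _ = (4 * L / K) ^ j * K.choose L := by
        rw [div_pow, mul_pow]
        field_simp

theorem sum_Icc_pow_le_two_mul_pow {x : ℝ} (hx0 : 0 ≤ x) (hx : x ≤ 1 / 2) (m n : ℕ) :
    ∑ j ∈ Icc m n, x ^ j ≤ 2 * x ^ m := by
  rw [← Finset.Ico_add_one_right_eq_Icc]
  calc ∑ j ∈ Ico m (n + 1), x ^ j ≤ x ^ m / (1 - x) :=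
        geom_sum_Ico_le_of_lt_one hx0 (by linarith)
    _ ≤ 2 * x ^ m := by
        rw [div_le_iff₀ (by linarith)]
        nlinarith [pow_nonneg hx0 m]

theorem card_powersetCard_filter_imbalance_lt_le {K L c : ℕ} (h8L : 8 * L ≤ K) {y : Fin K → ℝ}
    (hy : ∀ i, y i ∈ Set.Icc 0 1) :
    (#{R ∈ powersetCard L (univ : Finset (Fin K)) | imbalance R y < -c} : ℝ)
      ≤ 2 * (4 * L / K) ^ (c + 1) * K.choose L := by
  set P := powersetCard L (univ : Finset (Fin K))
  set B : ℕ → Finset (Finset (Fin K)) :=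
    fun j => {R ∈ P | j ≤ #(R ∩ topIndices y (2 * j - (c + 1)))}
  have hcover : {R ∈ P | imbalance R y < -c} ⊆ (Icc (c + 1) L).biUnion B := by
    intro R hR
    rw [mem_filter] at hR
    by_contra hnot
    simp only [B, mem_biUnion, mem_Icc, mem_filter, not_exists, not_and, not_le] at hnot
    refine (neg_le_imbalance_of_card_inter_topIndices_lt hy (mem_powersetCard.1 hR.1).2.le
      fun j h1 h2 => hnot j ⟨h1, h2⟩ hR.1).not_gt hR.2
  have hB : ∀ j ∈ Icc (c + 1) L, (#(B j) : ℝ) ≤ (4 * L / K) ^ j * K.choose L := by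
    intro j hj
    rw [mem_Icc] at hj
    exact card_powersetCard_filter_le_card_inter_le_pow (by omega) (by omega) hj.2 _
      ((card_topIndices_le y _).trans (by omega))
  have hx : 4 * (L : ℝ) / K ≤ 1 / 2 := by
    rcases Nat.eq_zero_or_pos K with hK | hK
    · simp [hK]
    rw [div_le_iff₀ (by positivity)]
    have : (8 * L : ℝ) ≤ K := by exact_mod_cast h8L
    linarith
  calc (#{R ∈ P | imbalance R y < -c} : ℝ)
      ≤ #((Icc (c + 1) L).biUnion B) := by exact_mod_cast card_le_card hcover
    _ ≤ ∑ j ∈ Icc (c + 1) L, (#(B j) : ℝ) := by exact_mod_cast card_biUnion_le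
    _ ≤ ∑ j ∈ Icc (c + 1) L, (4 * L / K : ℝ) ^ j * K.choose L := sum_le_sum hB
    _ ≤ 2 * (4 * L / K) ^ (c + 1) * K.choose L := by
        rw [← sum_mul]
        gcongr
        exact sum_Icc_pow_le_two_mul_pow (by positivity) hx _ _

theorem sum_measure_le_of_ae_card_le {α ι : Type*} [MeasurableSpace α] {μ : Measure α}
    {s : Finset ι} {A : ι → Set α} [∀ x, DecidablePred (x ∈ A ·)]
    (hA : ∀ i ∈ s, MeasurableSet (A i)) {N : ℝ≥0∞}
    (h : ∀ᵐ x ∂μ, (#{i ∈ s | x ∈ A i} : ℝ≥0∞) ≤ N) :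
    ∑ i ∈ s, μ (A i) ≤ N * μ Set.univ := by
  calc ∑ i ∈ s, μ (A i) = ∫⁻ x, ∑ i ∈ s, (A i).indicator 1 x ∂μ := by
        rw [lintegral_finsetSum _ fun i hi => measurable_one.indicator (hA i hi)]
        exact sum_congr rfl fun i hi => (lintegral_indicator_one (hA i hi)).symm
    _ ≤ ∫⁻ _, N ∂μ := by
        refine lintegral_mono_ae (h.mono fun x hx => ?_)
        simpa only [Set.indicator_apply, Pi.one_apply, sum_boole] using hx
    _ = N * μ Set.univ := lintegral_const N

theorem measurable_comp_right {ι ι' β : Type*} [MeasurableSpace β] (g : ι' → ι) :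
    Measurable fun f : ι → β => f ∘ g :=
  measurable_pi_lambda _ fun i => measurable_pi_apply (g i)

theorem map_pi_comp_perm_eq {Ω ι β : Type*} [MeasurableSpace Ω] [MeasurableSpace β] [Fintype ι]
    {μ : Measure Ω} {Y : ι → Ω → β} (hindep : iIndepFun Y μ)
    (hident : ∀ i j, IdentDistrib (Y i) (Y j) μ μ) (σ : Equiv.Perm ι) :
    (μ.map fun ω i => Y i ω).map (fun f => f ∘ σ) = μ.map fun ω i => Y i ω := by
  have hY : ∀ i, AEMeasurable (Y i) μ := fun i => (hident i i).aemeasurable_fst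
  rw [AEMeasurable.map_map_of_aemeasurable (measurable_comp_right σ).aemeasurable
    (aemeasurable_pi_lambda _ hY)]
  change μ.map (fun ω i => Y (σ i) ω) = _
  rw [(hindep.precomp σ.injective).map_fun_eq_pi_map (fun i => hY _),
    hindep.map_fun_eq_pi_map hY]
  congr 1
  funext i
  exact (hident _ _).map_eq

theorem measure_imbalance_lt_le {K L c : ℕ} (h8L : 8 * L ≤ K) {P : Measure (Fin K → ℝ)}
    [IsProbabilityMeasure P] (hP : ∀ σ : Equiv.Perm (Fin K), P.map (fun f => f ∘ σ) = P)
    (h01 : ∀ᵐ y ∂P, ∀ i, y i ∈ Set.Icc 0 1) {R : Finset (Fin K)} (hR : #R = L) :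
    P {y | imbalance R y < -c} ≤ ENNReal.ofReal (2 * (4 * L / K) ^ (c + 1)) := by
  have hsame : ∀ R' ∈ powersetCard L (univ : Finset (Fin K)),
      P {y | imbalance R' y < -c} = P {y | imbalance R y < -c} := by
    intro R' hR'
    obtain ⟨σ, rfl⟩ :=
      Equiv.Perm.exists_map_finset_eq R R' (hR.trans (mem_powersetCard.1 hR').2.symm)
    have hpre : {y | imbalance (R.map σ.toEmbedding) y < -c}
        = (fun f => f ∘ σ) ⁻¹' {y | imbalance R y < -c} := by
      ext y
      simp [imbalance_map_equiv]
    rw [hpre, ← Measure.map_apply (measurable_comp_right σ) (measurableSet_imbalance_lt R _), hP]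
  have hsum := sum_measure_le_of_ae_card_le (s := powersetCard L (univ : Finset (Fin K)))
    (fun R _ => measurableSet_imbalance_lt R (-c))
    (h01.mono fun y hy => (ENNReal.ofReal_natCast _).symm.trans_le
      (ENNReal.ofReal_le_ofReal (card_powersetCard_filter_imbalance_lt_le h8L hy)))
  rw [sum_congr rfl hsame, sum_const, card_powersetCard, card_univ, Fintype.card_fin,
    nsmul_eq_mul, measure_univ, mul_one, ENNReal.ofReal_mul (by positivity),
    ENNReal.ofReal_natCast, mul_comm (K.choose L : ℝ≥0∞)] at hsum
  exact (ENNReal.mul_le_mul_iff_left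
    (by exact_mod_cast (Nat.choose_pos (show L ≤ K by omega)).ne')
    (ENNReal.natCast_ne_top _)).1 hsum

theorem measure_imbalance_lt_le_of_iid {Ω : Type*} [MeasurableSpace Ω] {μ : Measure Ω}
    [IsProbabilityMeasure μ] {K L c : ℕ} (h8L : 8 * L ≤ K) {Y : Fin K → Ω → ℝ}
    (hindep : iIndepFun Y μ) (hident : ∀ i j, IdentDistrib (Y i) (Y j) μ μ)
    (hrange : ∀ i, ∀ᵐ ω ∂μ, Y i ω ∈ Set.Icc (0 : ℝ) 1) {R : Finset (Fin K)} (hR : #R = L) :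
    μ {ω | imbalance R (fun i => Y i ω) < -c} ≤ ENNReal.ofReal (2 * (4 * L / K) ^ (c + 1)) := by
  have hY : AEMeasurable (fun ω i => Y i ω) μ :=
    aemeasurable_pi_lambda _ fun i => (hident i i).aemeasurable_fst
  have h01 : ∀ᵐ y ∂(μ.map fun ω i => Y i ω), ∀ i, y i ∈ Set.Icc 0 1 := by
    rw [ae_map_iff hY (by measurability)]
    exact ae_all_iff.2 hrange
  have := Measure.isProbabilityMeasure_map hY
  change μ ((fun ω i => Y i ω) ⁻¹' {y | imbalance R y < -c}) ≤ _
  rw [← Measure.map_apply_of_aemeasurable hY (measurableSet_imbalance_lt R _)]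
  exact measure_imbalance_lt_le h8L (map_pi_comp_perm_eq hindep hident) h01 hR

theorem eight_mul_le_of_lt_div_four_mul_exp_one {L K : ℕ}
    (hLK : (L : ℝ) < K / (4 * Real.exp 1)) : 8 * L ≤ K := by
  have he : (2 : ℝ) < Real.exp 1 := lt_trans (by norm_num) Real.exp_one_gt_d9
  have h := (lt_div_iff₀ (by positivity : (0 : ℝ) < 4 * Real.exp 1)).1 hLK
  have : ((8 * L : ℕ) : ℝ) ≤ K := by push_cast; nlinarith
  exact_mod_cast this

theorem card_filter_sub_le_val {K L : ℕ} (hLK : L ≤ K) : #{i : Fin K | K - L ≤ (i : ℕ)} = L := by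
  have h := card_filter_add_card_filter_not (s := (univ : Finset (Fin K)))
    fun i : Fin K => (i : ℕ) < K - L
  simp only [not_lt, Fin.card_filter_val_lt, card_univ, Fintype.card_fin] at h
  omega

theorem stmt3_general (L K c : ℕ)
    (hLK : (L : ℝ) < K / (4 * Real.exp 1))
    {Ω : Type*} [MeasurableSpace Ω] (μ : Measure Ω) [IsProbabilityMeasure μ]
    (Y : Fin K → Ω → ℝ)
    (hindep : iIndepFun Y μ)
    (hident : ∀ i j, IdentDistrib (Y i) (Y j) μ μ)
    (hrange : ∀ i, ∀ᵐ ω ∂μ, Y i ω ∈ Set.Icc (0 : ℝ) 1) :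
    μ {ω | (∑ i ∈ Finset.univ.filter (fun i : Fin K => (i : ℕ) < K - L), Y i ω)
        - (∑ i ∈ Finset.univ.filter (fun i : Fin K => K - L ≤ (i : ℕ)), Y i ω)
        < -(c : ℝ)}
      ≤ ENNReal.ofReal (4 * (2 * Real.exp 1 * L / K) ^ (c + 1)) := by
  have h8L := eight_mul_le_of_lt_div_four_mul_exp_one hLK
  set R₀ : Finset (Fin K) := {i : Fin K | K - L ≤ (i : ℕ)}
  have hcompl : R₀ᶜ = univ.filter fun i : Fin K => (i : ℕ) < K - L := by
    ext i
    simp only [R₀, mem_compl, mem_filter, mem_univ, true_and, not_le]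
  rw [← hcompl]
  refine (measure_imbalance_lt_le_of_iid h8L hindep hident hrange
    (card_filter_sub_le_val (by omega))).trans (ENNReal.ofReal_le_ofReal ?_)
  have he : (2 : ℝ) < Real.exp 1 := lt_trans (by norm_num) Real.exp_one_gt_d9
  gcongr
  · norm_num
  · linarith

/-- Distribution-agnostic concentration inequality: for i.i.d. `Y_1, …, Y_K` supported
in `[0,1]` and `L < K/(4e)`, the probability that the sum of the first `K - L` draws
minus the sum of the last `L` draws is below `-c` is at most `4 (2eL/K)^{c+1}`. -/
theorem stmt3 (L K c : ℕ) (hL : 0 < L) (hc : 0 < c)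
    (hLK : (L : ℝ) < K / (4 * Real.exp 1))
    {Ω : Type*} [MeasurableSpace Ω] (μ : Measure Ω) [IsProbabilityMeasure μ]
    (Y : Fin K → Ω → ℝ)
    (hmeas : ∀ i, Measurable (Y i))
    (hindep : iIndepFun Y μ)
    (hident : ∀ i j, IdentDistrib (Y i) (Y j) μ μ)
    (hrange : ∀ i, ∀ᵐ ω ∂μ, Y i ω ∈ Set.Icc (0 : ℝ) 1) :
    μ {ω | (∑ i ∈ Finset.univ.filter (fun i : Fin K => (i : ℕ) < K - L), Y i ω)
        - (∑ i ∈ Finset.univ.filter (fun i : Fin K => K - L ≤ (i : ℕ)), Y i ω)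
        < -(c : ℝ)}
      ≤ ENNReal.ofReal (4 * (2 * Real.exp 1 * L / K) ^ (c + 1)) :=
  stmt3_general L K c hLK μ Y hindep hident hrange
end

section
/- Given real values a_1, …, a_k and b_1, …, b_ℓ in [0,1] and a real c ≥ 0, suppose that for every index i, the number of indices i' with a_{i'} ≥ a_i is at most c plus the number of indices i' with b_{i'} ≥ a_i. Then Σ_i a_i ≤ Σ_i b_i + c. -/
/-!
Layer-cake: for values in `[0, 1]`, `∑ i, a i = ∫ t in (0, 1), #{i | t < a i}`. For a fixed `t`,
applying the counting condition to the smallest `a i` above `t` gives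
`#{i | t < a i} ≤ #{j | t < b j} + c`, and integrating this over `(0, 1)` yields the claim.
-/

open MeasureTheory Set Finset

lemma integrableOn_Ioo_indicator_Iio (x : ℝ) :
    IntegrableOn ((Iio x).indicator (1 : ℝ → ℝ)) (Ioo 0 1) :=
  (integrableOn_const (by simp)).indicator measurableSet_Iio

lemma setIntegral_Ioo_indicator_Iio {x : ℝ} (hx : x ∈ Icc (0 : ℝ) 1) :
    ∫ t in Ioo 0 1, (Iio x).indicator (1 : ℝ → ℝ) t = x := by
  rw [integral_indicator_one measurableSet_Iio, measureReal_restrict_apply measurableSet_Iio,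
    Iio_inter_Ioo, min_eq_left hx.2, Real.volume_real_Ioo, sub_zero, max_eq_left hx.1]

section

variable {ι : Type*} [Fintype ι]

lemma natCast_card_filter_lt_eq_sum_indicator (a : ι → ℝ) (t : ℝ) :
    (#{i | t < a i} : ℝ) = ∑ i, (Iio (a i)).indicator (1 : ℝ → ℝ) t := by
  rw [natCast_card_filter]
  simp only [indicator_apply, Set.mem_Iio, Pi.one_apply]

lemma integrableOn_Ioo_card_filter_lt (a : ι → ℝ) :
    IntegrableOn (fun t => (#{i | t < a i} : ℝ)) (Ioo 0 1) := by
  simp_rw [natCast_card_filter_lt_eq_sum_indicator]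
  exact integrable_finsetSum _ fun i _ => integrableOn_Ioo_indicator_Iio (a i)

lemma setIntegral_Ioo_card_filter_lt (a : ι → ℝ) (ha : ∀ i, a i ∈ Icc (0 : ℝ) 1) :
    ∫ t in Ioo 0 1, (#{i | t < a i} : ℝ) = ∑ i, a i := by
  simp_rw [natCast_card_filter_lt_eq_sum_indicator]
  rw [integral_finsetSum _ fun i _ => integrableOn_Ioo_indicator_Iio (a i)]
  exact sum_congr rfl fun i _ => setIntegral_Ioo_indicator_Iio (ha i)

end

lemma card_filter_lt_le_card_filter_lt_add {ι κ : Type*} [Fintype ι] [Fintype κ]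
    {a : ι → ℝ} {b : κ → ℝ} {c : ℝ} (hc : 0 ≤ c)
    (hcount : ∀ i, (#{i' | a i ≤ a i'} : ℝ) ≤ #{j | a i ≤ b j} + c) (t : ℝ) :
    (#{i | t < a i} : ℝ) ≤ #{j | t < b j} + c := by
  obtain hS | hS := (univ.filter fun i => t < a i).eq_empty_or_nonempty
  · rw [hS, Finset.card_empty, Nat.cast_zero]
    positivity
  obtain ⟨i₀, hi₀, hmin⟩ := exists_min_image _ a hS
  have hti₀ : t < a i₀ := (mem_filter.1 hi₀).2
  calc (#{i | t < a i} : ℝ) ≤ #{i' | a i₀ ≤ a i'} := by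
        gcongr with i
        exact fun hi => hmin i (mem_filter.2 ⟨mem_univ i, hi⟩)
    _ ≤ #{j | a i₀ ≤ b j} + c := hcount i₀
    _ ≤ #{j | t < b j} + c := by
        gcongr

/-- Hall-type sufficient condition for bounded envy: if for every `i` the number of
`a`-values at least `a i` is at most `c` plus the number of `b`-values at least `a i`,
then `Σ a ≤ Σ b + c`. -/
theorem stmt4 (k l : ℕ) (a : Fin k → ℝ) (b : Fin l → ℝ)
    (ha : ∀ i, a i ∈ Set.Icc (0 : ℝ) 1) (hb : ∀ i, b i ∈ Set.Icc (0 : ℝ) 1)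
    (c : ℝ) (hc : 0 ≤ c)
    (hcount : ∀ i : Fin k,
      ((Finset.univ.filter (fun i' : Fin k => a i ≤ a i')).card : ℝ)
        ≤ ((Finset.univ.filter (fun i' : Fin l => a i ≤ b i')).card : ℝ) + c) :
    (∑ i, a i) ≤ (∑ i, b i) + c := by
  have hconst : IntegrableOn (fun _ => c) (Ioo (0 : ℝ) 1) := integrableOn_const (by simp)
  calc ∑ i, a i = ∫ t in Ioo 0 1, (#{i | t < a i} : ℝ) :=
        (setIntegral_Ioo_card_filter_lt a ha).symm
    _ ≤ ∫ t in Ioo 0 1, ((#{j | t < b j} : ℝ) + c) :=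
        integral_mono (integrableOn_Ioo_card_filter_lt a)
          ((integrableOn_Ioo_card_filter_lt b).add hconst)
          (card_filter_lt_le_card_filter_lt_add hc hcount)
    _ = ∑ j, b j + c := by
        rw [integral_add (integrableOn_Ioo_card_filter_lt b) hconst,
          setIntegral_Ioo_card_filter_lt b hb, setIntegral_const, Real.volume_real_Ioo]
        norm_num
end
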